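/- arXiv:math/0612661 — 3 statements merged into one kernel-verified Lean document; each statement's English description precedes it below -/
import Mathlib

section
/- Let A be the free non-associative algebra on generators a, b, c, d modulo the relations a·a = b, a·b = d, b·a = c, and all other products of generators equal to zero (so A is the 4-dimensional algebra with basis {a,b,c,d} and multiplication table: a·a=b, a·b=d, b·a=c, all other basis products 0). Then A is a 3-associative algebra: for all x,y,z,w ∈ A, (xy)(zw) + (x(yz))w + ((xy)z)w = x((yz)w) + x(y(zw)); but A is not associative. -/
/-- The product of the 4-dimensional algebra with basis `a, b, c, d` (coordinates
`0, 1, 2, 3`) and multiplication table `a·a = b`, `a·b = d`, `b·a = c`, all other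
basis products zero. -/
def tableMul {k : Type*} [Field k] (x y : Fin 4 → k) : Fin 4 → k :=
  ![0, x 0 * y 0, x 1 * y 0, x 0 * y 1]

/-- The 4-dimensional algebra with basis `{a,b,c,d}` and table `a·a=b, a·b=d, b·a=c`,
other products zero, is 3-associative:
`(xy)(zw) + (x(yz))w + ((xy)z)w = x((yz)w) + x(y(zw))` for all elements — but it is
not associative. -/
theorem tableMul_three_associative_not_associative (k : Type*) [Field k] :
    (∀ x y z w : Fin 4 → k,
        tableMul (tableMul x y) (tableMul z w) + tableMul (tableMul x (tableMul y z)) w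
            + tableMul (tableMul (tableMul x y) z) w
          = tableMul x (tableMul (tableMul y z) w) + tableMul x (tableMul y (tableMul z w))) ∧
    ¬ (∀ x y z : Fin 4 → k, tableMul (tableMul x y) z = tableMul x (tableMul y z)) := by
  constructor
  · intro x y z w
    funext i
    fin_cases i <;>
      simp [tableMul, Matrix.cons_val_zero, Matrix.cons_val_one, Pi.add_apply]
  · intro h
    have := congrFun (h ![1,0,0,0] ![1,0,0,0] ![1,0,0,0]) 2
    simp [tableMul] at this
end

section
/- dim ass^N(N+1) = (N+1)!·C_N − (N+1)!, where C_N = (1/(N+1))binom(2N,N): imposing the single relation Σ_{T ∈ RBT_{N+1}} T = 0 for each of the (N+1)! leaf-labelings reduces the dimension of the degree-(N+1) part of the free operad on one binary generator by exactly (N+1)!. -/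
open Tree

lemma catalan_pos' (n : ℕ) : 0 < catalan n := by
  induction n with
  | zero => simp [catalan]
  | succ m ih =>
    rw [catalan_succ]
    refine Finset.sum_pos' (fun i _ => Nat.zero_le _) ⟨0, Finset.mem_univ _, ?_⟩
    simpa using ih

/-- The dimension of `ass^N(N+1)` equals `(N+1)!·C_N − (N+1)!`: in the span of labelled
planar binary rooted trees with `N+1` leaves (`N` internal nodes), the `(N+1)!`
leaf-relabelings of the relation `∑_{T ∈ RBT_{N+1}} T` are linearly independent, so the
quotient by their span has dimension `(N+1)!·C_N − (N+1)!`. -/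
theorem assN_dimension_top_arity (k : Type*) [Field k] (N : ℕ) (hN : 1 ≤ N) :
    Module.finrank k
        ((({T // T ∈ treesOfNumNodesEq N} × Equiv.Perm (Fin (N + 1))) → k) ⧸
          Submodule.span k
            (Set.range fun g : Equiv.Perm (Fin (N + 1)) =>
              (fun b : {T // T ∈ treesOfNumNodesEq N} × Equiv.Perm (Fin (N + 1)) =>
                if b.2 = g then (1 : k) else 0)))
      = (N + 1).factorial * catalan N - (N + 1).factorial := by
  classical
  have hT : Nonempty {T // T ∈ treesOfNumNodesEq N} := by
    rw [Finset.nonempty_coe_sort, ← Finset.card_pos, BinaryTree.treesOfNumNodesEq_card_eq_catalan]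
    exact catalan_pos' N
  obtain ⟨T₀⟩ := hT
  set v : Equiv.Perm (Fin (N + 1)) →
      ({T // T ∈ treesOfNumNodesEq N} × Equiv.Perm (Fin (N + 1))) → k :=
    fun g b => if b.2 = g then (1 : k) else 0 with hv
  have hli : LinearIndependent k v := by
    rw [Fintype.linearIndependent_iff]
    intro c hc g
    have := congrFun hc (T₀, g)
    simpa [v, Finset.sum_ite_eq] using this
  have hspan : Module.finrank k (Submodule.span k (Set.range v))
      = Fintype.card (Equiv.Perm (Fin (N + 1))) := finrank_span_eq_card hli
  have hq := Submodule.finrank_quotient_add_finrank (Submodule.span k (Set.range v))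
  have htot : Module.finrank k
      (({T // T ∈ treesOfNumNodesEq N} × Equiv.Perm (Fin (N + 1))) → k)
      = catalan N * (N + 1).factorial := by
    rw [Module.finrank_pi, Fintype.card_prod, Fintype.card_coe,
      BinaryTree.treesOfNumNodesEq_card_eq_catalan, Fintype.card_perm, Fintype.card_fin]
  rw [hspan, htot, Fintype.card_perm, Fintype.card_fin] at hq
  have hle : (N + 1).factorial ≤ catalan N * (N + 1).factorial :=
    Nat.le_mul_of_pos_left _ (catalan_pos' N)
  rw [mul_comm]
  omega
end

section
/- For a graded associative algebra A of depth 3 (i.e., δ = d + m on T^{≤2}(A[1]) with δ^3 = 0), the conditions on the components d : A[1]→A[1] and m : A[1]^{⊗2}→A[1] are exactly: (i) d^3 = 0; (ii) d^2 m + d m d + m d^2 = 0 (as maps A[1]^{⊗2}→A[1], where m d means m∘(d⊗1 + 1⊗d) with Koszul signs); (iii) d m m + m d m + m m d = 0 (as operators reducing three inputs to one, where each composition is the coderivation-insertion composition); (iv) m^3 = 0 (3-associativity). Conversely, these four conditions imply δ^3 = 0. -/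
open DirectSum

set_option synthInstance.maxHeartbeats 1000000 in
set_option maxHeartbeats 1000000 in
private lemma four_homog_eq_zero {R : Type*} [Ring R]
    (𝒜 : ℕ → Submodule ℤ R) [GradedRing 𝒜] {a b c e : R}
    (ha : a ∈ 𝒜 0) (hb : b ∈ 𝒜 1) (hc : c ∈ 𝒜 2) (he : e ∈ 𝒜 3) :
    a + b + c + e = 0 ↔ (a = 0 ∧ b = 0 ∧ c = 0 ∧ e = 0) := by
  constructor
  · intro h
    have comp : ∀ i, (DirectSum.decompose 𝒜 (a + b + c + e) i : R) = 0 := by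
      intro i; rw [h]; simp
    have h0 := comp 0
    have h1 := comp 1
    have h2 := comp 2
    have h3 := comp 3
    simp only [DirectSum.decompose_add, map_add, DirectSum.add_apply, Submodule.coe_add,
      DirectSum.decompose_of_mem_same 𝒜 ha,
      DirectSum.decompose_of_mem_ne 𝒜 ha (show (0:ℕ) ≠ 1 by norm_num),
      DirectSum.decompose_of_mem_ne 𝒜 ha (show (0:ℕ) ≠ 2 by norm_num),
      DirectSum.decompose_of_mem_ne 𝒜 ha (show (0:ℕ) ≠ 3 by norm_num),
      DirectSum.decompose_of_mem_same 𝒜 hb,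
      DirectSum.decompose_of_mem_ne 𝒜 hb (show (1:ℕ) ≠ 0 by norm_num),
      DirectSum.decompose_of_mem_ne 𝒜 hb (show (1:ℕ) ≠ 2 by norm_num),
      DirectSum.decompose_of_mem_ne 𝒜 hb (show (1:ℕ) ≠ 3 by norm_num),
      DirectSum.decompose_of_mem_same 𝒜 hc,
      DirectSum.decompose_of_mem_ne 𝒜 hc (show (2:ℕ) ≠ 0 by norm_num),
      DirectSum.decompose_of_mem_ne 𝒜 hc (show (2:ℕ) ≠ 1 by norm_num),
      DirectSum.decompose_of_mem_ne 𝒜 hc (show (2:ℕ) ≠ 3 by norm_num),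
      DirectSum.decompose_of_mem_same 𝒜 he,
      DirectSum.decompose_of_mem_ne 𝒜 he (show (3:ℕ) ≠ 0 by norm_num),
      DirectSum.decompose_of_mem_ne 𝒜 he (show (3:ℕ) ≠ 1 by norm_num),
      DirectSum.decompose_of_mem_ne 𝒜 he (show (3:ℕ) ≠ 2 by norm_num),
      add_zero, zero_add] at h0 h1 h2 h3
    exact ⟨h0, h1, h2, h3⟩
  · rintro ⟨ha0, hb0, hc0, he0⟩
    simp [ha0, hb0, hc0, he0]

/-- Let `δ = d + m` be the coderivation on `T^{≤2}(A[1])` determined by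
`d : A[1] → A[1]` and `m : A[1]^{⊗2} → A[1]`.  The powers of `δ` are computed in the
associative ring of coderivation-insertion operators, which is graded by arity-drop:
`d` has degree `0` and `m` degree `1`, and the four summands of
`δ³ = d³ + (d²m + dmd + md²) + (dm² + mdm + m²d) + m³` land in distinct homogeneous
(Hom-)components.  Hence `δ³ = 0` iff
(i) `d³ = 0`, (ii) `d²m + dmd + md² = 0`, (iii) `dm² + mdm + m²d = 0`, (iv) `m³ = 0`. -/
theorem depth_three_conditions {R : Type*} [Ring R]
    (𝒜 : ℕ → Submodule ℤ R) [GradedRing 𝒜]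
    (d m : R) (hd : d ∈ 𝒜 0) (hm : m ∈ 𝒜 1) :
    (d + m) ^ 3 = 0 ↔
      (d ^ 3 = 0 ∧
       d ^ 2 * m + d * m * d + m * d ^ 2 = 0 ∧
       d * m ^ 2 + m * d * m + m ^ 2 * d = 0 ∧
       m ^ 3 = 0) := by
  have hd2 : d ^ 2 ∈ 𝒜 0 := by simpa using SetLike.pow_mem_graded 2 hd
  have hd3 : d ^ 3 ∈ 𝒜 0 := by simpa using SetLike.pow_mem_graded 3 hd
  have hm2 : m ^ 2 ∈ 𝒜 2 := by simpa using SetLike.pow_mem_graded 2 hm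
  have hm3 : m ^ 3 ∈ 𝒜 3 := by simpa using SetLike.pow_mem_graded 3 hm
  have h1 : d ^ 2 * m + d * m * d + m * d ^ 2 ∈ 𝒜 1 := by
    refine add_mem (add_mem ?_ ?_) ?_
    · simpa using SetLike.mul_mem_graded hd2 hm
    · simpa using SetLike.mul_mem_graded (SetLike.mul_mem_graded hd hm) hd
    · simpa using SetLike.mul_mem_graded hm hd2
  have h2 : d * m ^ 2 + m * d * m + m ^ 2 * d ∈ 𝒜 2 := by
    refine add_mem (add_mem ?_ ?_) ?_
    · simpa using SetLike.mul_mem_graded hd hm2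
    · simpa using SetLike.mul_mem_graded (SetLike.mul_mem_graded hm hd) hm
    · simpa using SetLike.mul_mem_graded hm2 hd
  have hexp : (d + m) ^ 3 =
      d ^ 3 + (d ^ 2 * m + d * m * d + m * d ^ 2) +
        (d * m ^ 2 + m * d * m + m ^ 2 * d) + m ^ 3 := by
    noncomm_ring
  rw [hexp]
  exact four_homog_eq_zero 𝒜 hd3 h1 h2 hm3
end
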